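/- Let G=(V,E) be a finite graph with thresholds t:V→ℕ satisfying 1 ≤ t(v) ≤ d_G(v) for all v, let G'=(V',E') be the gadget graph of G, and let s be any incentive vector on V'. For any v ∈ V and any round ℓ ≥ 0, if some vertex of the gadget Λ_v belongs to Active[s,ℓ], then all vertices of Λ_v belong to Active[s,ℓ+3]. -/

import Mathlib

/-- Vertices of the gadget graph `G'` of `G`: for each `v ∈ V` the gadget `Λ_v` has
vertex set `{v', v'', v_1, …, v_{d_G(v)}}`, encoded as `Σ v : V, Fin (d_G(v) + 2)`,
where index `0` encodes `v'`, index `1` encodes `v''`, and indices `2, …, d_G(v)+1`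
encode the internal vertices `v_1, …, v_{d_G(v)}`. -/
abbrev GadgetVert {V : Type*} [Fintype V] (G : SimpleGraph V) [DecidableRel G.Adj] : Type _ :=
  Σ v : V, Fin (G.degree v + 2)

/-- Adjacency of the gadget graph: `u'` and `w'` are adjacent whenever `u` and `w` are
adjacent in `G`; inside each gadget `Λ_v`, the vertices `v'` and `v''` are joined by the
internally disjoint paths `(v', v_i, v'')`, `i = 1, …, d_G(v)`. -/
def gadgetAdj {V : Type*} [Fintype V] (G : SimpleGraph V) [DecidableRel G.Adj]
    (a b : GadgetVert G) : Prop :=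
  ((a.2 : ℕ) = 0 ∧ (b.2 : ℕ) = 0 ∧ G.Adj a.1 b.1) ∨
  (a.1 = b.1 ∧
    (((a.2 : ℕ) = 0 ∧ 2 ≤ (b.2 : ℕ)) ∨ (2 ≤ (a.2 : ℕ) ∧ (b.2 : ℕ) = 0) ∨
     ((a.2 : ℕ) = 1 ∧ 2 ≤ (b.2 : ℕ)) ∨ (2 ≤ (a.2 : ℕ) ∧ (b.2 : ℕ) = 1)))

instance gadgetAdj.decidable {V : Type*} [Fintype V] [DecidableEq V]
    (G : SimpleGraph V) [DecidableRel G.Adj] : DecidableRel (gadgetAdj G) := fun a b => by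
  unfold gadgetAdj; infer_instance

/-- The gadget graph `G'` of `G`. -/
def gadgetGraph {V : Type*} [Fintype V] (G : SimpleGraph V) [DecidableRel G.Adj] :
    SimpleGraph (GadgetVert G) where
  Adj := gadgetAdj G
  symm := ⟨by
    rintro ⟨v, i⟩ ⟨u, j⟩ (⟨hi, hj, hadj⟩ | ⟨rfl, h⟩)
    · exact Or.inl ⟨hj, hi, hadj.symm⟩
    · exact Or.inr ⟨rfl, by tauto⟩⟩
  loopless := ⟨by
    rintro ⟨v, i⟩ (⟨_, _, hadj⟩ | ⟨_, h⟩)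
    · exact G.loopless.irrefl v hadj
    · omega⟩

instance {V : Type*} [Fintype V] [DecidableEq V] (G : SimpleGraph V) [DecidableRel G.Adj] :
    DecidableRel (gadgetGraph G).Adj :=
  fun a b => inferInstanceAs (Decidable (gadgetAdj G a b))

/-- The thresholds on the gadget graph: `v'` keeps the threshold `t v` of `v`, every
other vertex of the gadget `Λ_v` has threshold `1`. -/
def gadgetThreshold {V : Type*} [Fintype V] (G : SimpleGraph V) [DecidableRel G.Adj]
    (t : V → ℕ) (a : GadgetVert G) : ℕ :=
  if (a.2 : ℕ) = 0 then t a.1 else 1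

/-- `activeVec G t s ℓ` : the set of vertices active at round `ℓ` of the activation
process in `G` with thresholds `t`, starting with partial incentives `s`. -/
def activeVec {V : Type*} [Fintype V] [DecidableEq V] (G : SimpleGraph V) [DecidableRel G.Adj]
    (t s : V → ℕ) : ℕ → Finset V
  | 0 => Finset.univ.filter fun v => t v ≤ s v
  | ℓ + 1 =>
    activeVec G t s ℓ ∪
      Finset.univ.filter fun u => t u - s u ≤ (G.neighborFinset u ∩ activeVec G t s ℓ).card

/-- `s` is a target vector for `G` with thresholds `t`. -/
def isTargetVec {V : Type*} [Fintype V] [DecidableEq V] (G : SimpleGraph V) [DecidableRel G.Adj]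
    (t s : V → ℕ) : Prop :=
  ∃ ℓ, activeVec G t s ℓ = Finset.univ

/-- `activeSet G t S ℓ` : the set of vertices active at round `ℓ` of the activation
process in `G` with thresholds `t`, starting at the seed set `S`. -/
def activeSet {V : Type*} [Fintype V] [DecidableEq V] (G : SimpleGraph V) [DecidableRel G.Adj]
    (t : V → ℕ) (S : Finset V) : ℕ → Finset V
  | 0 => S
  | ℓ + 1 =>
    activeSet G t S ℓ ∪
      Finset.univ.filter fun u => t u ≤ (G.neighborFinset u ∩ activeSet G t S ℓ).card

/-- `S` is a target set for `G` with thresholds `t`. -/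
def isTargetSet {V : Type*} [Fintype V] [DecidableEq V] (G : SimpleGraph V) [DecidableRel G.Adj]
    (t : V → ℕ) (S : Finset V) : Prop :=
  ∃ ℓ, activeSet G t S ℓ = Finset.univ


/-!
Inside a gadget every vertex other than `v'` has threshold `1`, so activity spreads along
single edges: from a terminal `v'` or `v''` to all internal vertices in one round, and from an
internal vertex to `v''` in one round. Hence all internal vertices are active two rounds after
any vertex of `Λ_v` is. The terminals `v'` and `v''` are adjacent to all `d_G(v)` internal
vertices and have threshold at most `d_G(v)`, so one more round activates them.
-/

section ActivationProcess

open Finset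

variable {V : Type*} [Fintype V] [DecidableEq V] {G : SimpleGraph V} [DecidableRel G.Adj]
  {t s : V → ℕ}

theorem activeVec_subset_succ (ℓ : ℕ) : activeVec G t s ℓ ⊆ activeVec G t s (ℓ + 1) := by
  rw [activeVec]
  exact subset_union_left

theorem mem_activeVec_succ_of_subset {u : V} {ℓ : ℕ} {A : Finset V}
    (hA : ∀ w ∈ A, G.Adj u w ∧ w ∈ activeVec G t s ℓ) (hcard : t u ≤ #A) :
    u ∈ activeVec G t s (ℓ + 1) := by
  have hsub : A ⊆ G.neighborFinset u ∩ activeVec G t s ℓ := fun w hw =>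
    mem_inter.mpr ⟨(G.mem_neighborFinset u w).mpr (hA w hw).1, (hA w hw).2⟩
  rw [activeVec]
  refine mem_union_right _ (mem_filter.mpr ⟨mem_univ u, ?_⟩)
  exact (Nat.sub_le _ _).trans (hcard.trans (card_le_card hsub))

theorem mem_activeVec_succ_of_adj {u w : V} {ℓ : ℕ} (hu : t u ≤ 1) (hadj : G.Adj u w)
    (hw : w ∈ activeVec G t s ℓ) : u ∈ activeVec G t s (ℓ + 1) :=
  mem_activeVec_succ_of_subset (A := {w}) (by simpa using ⟨hadj, hw⟩) (by simpa using hu)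

end ActivationProcess

section Gadget

variable {V : Type*} [Fintype V] {G : SimpleGraph V} [DecidableRel G.Adj]

theorem gadgetGraph_adj_of_lt_two_le {v : V} {i j : Fin (G.degree v + 2)} (hi : (i : ℕ) < 2)
    (hj : 2 ≤ (j : ℕ)) : (gadgetGraph G).Adj ⟨v, i⟩ ⟨v, j⟩ :=
  Or.inr ⟨rfl, by dsimp only; omega⟩

theorem gadgetThreshold_of_ne_zero (t : V → ℕ) {u : V} {j : Fin (G.degree u + 2)}
    (hj : (j : ℕ) ≠ 0) : gadgetThreshold G t ⟨u, j⟩ = 1 :=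
  if_neg hj

theorem gadgetThreshold_le_degree {t : V → ℕ} (ht : ∀ v, 1 ≤ t v ∧ t v ≤ G.degree v)
    (a : GadgetVert G) : gadgetThreshold G t a ≤ G.degree a.1 := by
  unfold gadgetThreshold
  split_ifs
  · exact (ht a.1).2
  · exact (ht a.1).1.trans (ht a.1).2

/-- The internal vertices `v_1, …, v_{d_G(v)}` of the gadget `Λ_v`. -/
def gadgetInternal (G : SimpleGraph V) [DecidableRel G.Adj] (v : V) : Finset (GadgetVert G) :=
  Finset.univ.map ((Fin.addNatEmb 2).trans
    (Function.Embedding.sigmaMk (β := fun u => Fin (G.degree u + 2)) v))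

theorem card_gadgetInternal (v : V) : (gadgetInternal G v).card = G.degree v := by
  simp [gadgetInternal]

theorem mem_gadgetInternal {v u : V} {j : Fin (G.degree u + 2)} :
    (⟨u, j⟩ : GadgetVert G) ∈ gadgetInternal G v ↔ u = v ∧ 2 ≤ (j : ℕ) := by
  simp only [gadgetInternal, Finset.mem_map, Finset.mem_univ, true_and]
  constructor
  · rintro ⟨k, hk⟩
    cases hk
    simp
  · rintro ⟨rfl, hj⟩
    exact ⟨⟨j - 2, by omega⟩, Sigma.ext rfl (heq_of_eq (Fin.ext (Nat.sub_add_cancel hj)))⟩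

variable [DecidableEq V] {t : V → ℕ} {s : GadgetVert G → ℕ} {v : V} {ℓ : ℕ}

local notation "Active" => activeVec (gadgetGraph G) (gadgetThreshold G t) s

theorem gadget_internal_mem_activeVec_succ_of_terminal {i : Fin (G.degree v + 2)}
    (hi : (i : ℕ) < 2) (hact : ⟨v, i⟩ ∈ Active ℓ) :
    ∀ a ∈ gadgetInternal G v, a ∈ Active (ℓ + 1) := by
  rintro ⟨u, j⟩ ha
  obtain ⟨rfl, hj⟩ := mem_gadgetInternal.mp ha
  exact mem_activeVec_succ_of_adj (gadgetThreshold_of_ne_zero t (by omega)).le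
    (gadgetGraph_adj_of_lt_two_le hi hj).symm hact

theorem gadget_terminal_mem_activeVec_succ {i : Fin (G.degree v + 2)} (hi : (i : ℕ) < 2)
    (hti : gadgetThreshold G t ⟨v, i⟩ ≤ G.degree v)
    (hact : ∀ a ∈ gadgetInternal G v, a ∈ Active ℓ) :
    ⟨v, i⟩ ∈ Active (ℓ + 1) := by
  refine mem_activeVec_succ_of_subset (fun a ha => ⟨?_, hact a ha⟩)
    (hti.trans (card_gadgetInternal v).ge)
  obtain ⟨u, j⟩ := a
  obtain ⟨rfl, hj⟩ := mem_gadgetInternal.mp ha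
  exact gadgetGraph_adj_of_lt_two_le hi hj

theorem gadget_internal_mem_activeVec_add_two {i : Fin (G.degree v + 2)}
    (hact : ⟨v, i⟩ ∈ Active ℓ) : ∀ a ∈ gadgetInternal G v, a ∈ Active (ℓ + 2) := by
  by_cases hi : (i : ℕ) < 2
  · exact fun a ha =>
      activeVec_subset_succ _ (gadget_internal_mem_activeVec_succ_of_terminal hi hact a ha)
  · have hsecond : (⟨v, 1⟩ : GadgetVert G) ∈ Active (ℓ + 1) :=
      mem_activeVec_succ_of_adj (gadgetThreshold_of_ne_zero t (by simp)).le
        (gadgetGraph_adj_of_lt_two_le (by simp) (by omega)) hact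
    exact gadget_internal_mem_activeVec_succ_of_terminal (by simp) hsecond

end Gadget

/-- In the gadget graph `G'` with any incentive vector `s`: if some vertex of the gadget
`Λ_v` is active at round `ℓ`, then all vertices of `Λ_v` are active at round `ℓ + 3`. -/
theorem gadget_activates_within_three_rounds {V : Type*} [Fintype V] [DecidableEq V]
    (G : SimpleGraph V) [DecidableRel G.Adj] (t : V → ℕ)
    (ht : ∀ v, 1 ≤ t v ∧ t v ≤ G.degree v)
    (s : GadgetVert G → ℕ) (v : V) (ℓ : ℕ)
    (h : ∃ i : Fin (G.degree v + 2),
      (⟨v, i⟩ : GadgetVert G) ∈ activeVec (gadgetGraph G) (gadgetThreshold G t) s ℓ) :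
    ∀ i : Fin (G.degree v + 2),
      (⟨v, i⟩ : GadgetVert G) ∈ activeVec (gadgetGraph G) (gadgetThreshold G t) s (ℓ + 3) := by
  obtain ⟨i₀, hi₀⟩ := h
  have hinternal := gadget_internal_mem_activeVec_add_two hi₀
  intro i
  by_cases hi : (i : ℕ) < 2
  · exact gadget_terminal_mem_activeVec_succ hi (gadgetThreshold_le_degree ht ⟨v, i⟩) hinternal
  · exact activeVec_subset_succ _ (hinternal _ (mem_gadgetInternal.mpr ⟨rfl, by omega⟩))
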